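/- Let M be a loopless matroid of rank d on ground set E, with independence complex I(M). If M is PS-ear decomposable with h-vector satisfying h_d(I(M)) = k, then for each 0 ≤ i ≤ d one has h_i(I(M)) ≤ C(d,i) + (k−1)·C(d−1,i−1). -/

import Mathlib

open Polynomial Finset

/-- The h-polynomial `h(Δ,t) = ∑_{i=0}^d f_{i-1} t^i (1-t)^{d-i}` of a complex of
dimension `d-1`, written as a sum over faces. -/
noncomputable def hPoly {α : Type*} [DecidableEq α] (d : ℕ) (Δ : Finset (Finset α)) :
    Polynomial ℤ :=
  ∑ F ∈ Δ, X ^ F.card * (1 - X) ^ (d - F.card)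

/-- The join of two complexes. -/
def joinC {α : Type*} [DecidableEq α] (Δ₁ Δ₂ : Finset (Finset α)) : Finset (Finset α) :=
  (Δ₁ ×ˢ Δ₂).image fun p => p.1 ∪ p.2

/-- A PS-sphere: a join of boundaries of simplices. -/
def IsPSSphere {α : Type*} [DecidableEq α] (S : Finset (Finset α)) : Prop :=
  ∃ P : Finset (Finset α), (∀ B ∈ P, 2 ≤ B.card) ∧
    (P : Set (Finset α)).Pairwise Disjoint ∧
    S = (P.sup id).powerset.filter fun F => ∀ B ∈ P, ¬B ⊆ F

/-- `K` is a PS-ball with boundary `B`. -/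
def IsPSBall {α : Type*} [DecidableEq α] (K B : Finset (Finset α)) : Prop :=
  ∃ (S : Finset (Finset α)) (G : Finset α), IsPSSphere S ∧ G.Nonempty ∧
    Disjoint (S.sup id) G ∧ K = joinC S G.powerset ∧ B = joinC S (G.powerset.erase G)

/-- `Δ'` is obtained from `Δ` by attaching a PS-ear. -/
def EarAttach {α : Type*} [DecidableEq α] (Δ Δ' : Finset (Finset α)) : Prop :=
  ∃ K B : Finset (Finset α), IsPSBall K B ∧ K.sup Finset.card = Δ.sup Finset.card ∧
    Δ ∩ K = B ∧ Δ' = Δ ∪ K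

/-- `Δ` is PS-ear decomposable. -/
def PSEarDecomposable {α : Type*} [DecidableEq α] (Δ : Finset (Finset α)) : Prop :=
  ∃ (n : ℕ) (c : ℕ → Finset (Finset α)), IsPSSphere (c 0) ∧
    (∀ j < n, EarAttach (c j) (c (j + 1))) ∧ c n = Δ

/-- The independence complex of a matroid, as a finset of finsets. -/
noncomputable def indepComplex {α : Type*} [DecidableEq α] [Fintype α] (M : Matroid α) :
    Finset (Finset α) := by
  classical exact Finset.univ.filter fun F : Finset α => M.Indep ↑F

/-!
The h-polynomial is additive over unions of complexes and multiplicative over joins of complexes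
on disjoint vertex sets. A PS-sphere is a join of boundaries of simplices, and the boundary of a
simplex on `a + 1` vertices has h-polynomial `1 + t + ⋯ + tᵃ`; hence a PS-sphere of dimension
`D - 1` has an h-polynomial lying coefficientwise between `0` and `(1 + t)ᴰ`, with `h_D = 1`.
Attaching the ear `S * 2^G` along `S * ∂2^G` adds exactly the faces `F ∪ G` with `F ∈ S`, which
adds `t^|G| h(S)` to the h-polynomial: this raises `h_d` by one and each `h_i` by at most
`C(d-1, i-1)`. All bases of a matroid have the same size, so `d` is the dimension of `I(M)`.
-/

lemma Nat.choose_le_choose_add_add (n m a : ℕ) : n.choose m ≤ (n + a).choose (m + a) := by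
  induction a with
  | zero => rfl
  | succ a ih => exact ih.trans (by rw [← add_assoc, ← add_assoc, Nat.choose_succ_succ]; omega)

/-- Satisfied by the h-polynomial of a PS-sphere of dimension `D - 1`. -/
def IsSphereHPoly (D : ℕ) (p : ℤ[X]) : Prop :=
  (∀ i, 0 ≤ p.coeff i ∧ p.coeff i ≤ D.choose i) ∧ p.coeff D = 1

namespace IsSphereHPoly

variable {D E : ℕ} {p q : ℤ[X]}

lemma one : IsSphereHPoly 0 1 :=
  ⟨fun i => by rcases i with _ | i <;> simp [coeff_one], by simp⟩

lemma geom_sum (a : ℕ) : IsSphereHPoly a (∑ j ∈ range (a + 1), X ^ j) := by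
  have hcoeff : ∀ i, (∑ j ∈ range (a + 1), (X : ℤ[X]) ^ j).coeff i = if i ≤ a then 1 else 0 := by
    intro i
    simp [coeff_X_pow]
  refine ⟨fun i => ?_, by simp [hcoeff]⟩
  rw [hcoeff]
  split_ifs with hi
  · exact ⟨zero_le_one, by exact_mod_cast Nat.choose_pos hi⟩
  · exact ⟨le_rfl, Nat.cast_nonneg _⟩

lemma natDegree_le (hp : IsSphereHPoly D p) : p.natDegree ≤ D :=
  natDegree_le_iff_coeff_eq_zero.mpr fun i hi => le_antisymm
    (by simpa [Nat.choose_eq_zero_of_lt hi] using (hp.1 i).2) (hp.1 i).1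

lemma mul (hp : IsSphereHPoly D p) (hq : IsSphereHPoly E q) : IsSphereHPoly (D + E) (p * q) := by
  refine ⟨fun i => ⟨?_, ?_⟩, ?_⟩
  · rw [coeff_mul]
    exact sum_nonneg fun x _ => mul_nonneg (hp.1 _).1 (hq.1 _).1
  · rw [coeff_mul, Nat.add_choose_eq]
    push_cast
    exact sum_le_sum fun x _ =>
      mul_le_mul (hp.1 _).2 (hq.1 _).2 (hq.1 _).1 ((hp.1 _).1.trans (hp.1 _).2)
  · rw [coeff_mul_add_eq_of_natDegree_le hp.natDegree_le hq.natDegree_le, hp.2, hq.2, mul_one]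

lemma coeff_X_pow_mul_le (hp : IsSphereHPoly D p) {g : ℕ} (hg : 0 < g) (i : ℕ) :
    (X ^ g * p).coeff i ≤ ((D + g - 1).choose (i - 1) : ℤ) := by
  rw [coeff_X_pow_mul']
  split_ifs with hgi
  · obtain ⟨g, rfl⟩ := Nat.exists_eq_add_one_of_ne_zero hg.ne'
    obtain ⟨m, rfl⟩ := Nat.exists_eq_add_of_le hgi
    rw [Nat.add_sub_cancel_left, show D + (g + 1) - 1 = D + g by omega,
      show g + 1 + m - 1 = m + g by omega]
    exact (hp.1 m).2.trans (by exact_mod_cast Nat.choose_le_choose_add_add D m g)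
  · positivity

lemma coeff_X_pow_mul_add (hp : IsSphereHPoly D p) (g : ℕ) : (X ^ g * p).coeff (D + g) = 1 := by
  rw [coeff_X_pow_mul, hp.2]

end IsSphereHPoly

section

variable {α : Type*}

lemma sup_card_powerset (G : Finset α) : G.powerset.sup card = G.card :=
  le_antisymm (Finset.sup_le fun _ hC => card_le_card (mem_powerset.mp hC))
    (le_sup (mem_powerset_self G))

variable [DecidableEq α]

lemma hPoly_succ {d : ℕ} {Δ : Finset (Finset α)} (hΔ : ∀ F ∈ Δ, F.card ≤ d) :
    hPoly (d + 1) Δ = (1 - X) * hPoly d Δ := by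
  rw [hPoly, hPoly, mul_sum]
  refine sum_congr rfl fun F hF => ?_
  rw [Nat.sub_add_comm (hΔ F hF), pow_succ]
  ring

lemma hPoly_powerset (G : Finset α) : hPoly G.card G.powerset = 1 := by
  rw [hPoly, sum_pow_mul_eq_add_pow, add_sub_cancel, one_pow]

lemma hPoly_powerset_eq_add (G : Finset α) :
    hPoly G.card G.powerset = hPoly G.card (G.powerset.erase G) + X ^ G.card := by
  rw [hPoly, hPoly, ← sum_erase_add _ _ (mem_powerset_self G), Nat.sub_self, pow_zero, mul_one]

lemma card_le_of_mem_powerset_erase {B C : Finset α} {a : ℕ} (hB : B.card = a + 1)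
    (hC : C ∈ B.powerset.erase B) : C.card ≤ a := by
  obtain ⟨hne, hsub⟩ := mem_erase.mp hC
  have := card_lt_card (lt_of_le_of_ne (mem_powerset.mp hsub) hne)
  omega

lemma sup_card_powerset_erase {B : Finset α} {a : ℕ} (hB : B.card = a + 1) :
    (B.powerset.erase B).sup card = a := by
  refine le_antisymm (Finset.sup_le fun C hC => card_le_of_mem_powerset_erase hB hC) ?_
  obtain ⟨b, hb⟩ := card_pos.mp (by omega : 0 < B.card)
  have hmem : B.erase b ∈ B.powerset.erase B :=
    mem_erase.mpr ⟨(erase_ssubset hb).ne, mem_powerset.mpr (erase_subset b B)⟩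
  simpa [card_erase_of_mem hb, hB] using le_sup (f := card) hmem

lemma hPoly_boundary_simplex {B : Finset α} {a : ℕ} (hB : B.card = a + 1) :
    hPoly a (B.powerset.erase B) = ∑ j ∈ range (a + 1), X ^ j := by
  have h1X : (1 - X : ℤ[X]) ≠ 0 := fun h => by simpa using congrArg (eval 0) h
  apply mul_left_cancel₀ h1X
  have := hPoly_powerset_eq_add B
  rw [hPoly_powerset, hB] at this
  rw [← hPoly_succ fun C => card_le_of_mem_powerset_erase hB, mul_neg_geom_sum]
  linear_combination -this

lemma union_injOn_of_disjoint {Δ₁ Δ₂ : Finset (Finset α)}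
    (hdisj : ∀ F₁ ∈ Δ₁, ∀ F₂ ∈ Δ₂, Disjoint F₁ F₂) :
    Set.InjOn (fun p : Finset α × Finset α => p.1 ∪ p.2) ↑(Δ₁ ×ˢ Δ₂) := by
  rintro ⟨F₁, F₂⟩ hF ⟨F₁', F₂'⟩ hF' (h : F₁ ∪ F₂ = F₁' ∪ F₂')
  simp only [coe_product, Set.mem_prod, mem_coe] at hF hF'
  have h₁ : F₁ ⊆ F₁' := (hdisj _ hF.1 _ hF'.2).left_le_of_le_sup_right
    (h ▸ subset_union_left : F₁ ⊆ F₁' ∪ F₂')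
  have h₁' : F₁' ⊆ F₁ := (hdisj _ hF'.1 _ hF.2).left_le_of_le_sup_right
    (h ▸ subset_union_left : F₁' ⊆ F₁ ∪ F₂)
  have h₂ : F₂ ⊆ F₂' := (hdisj _ hF'.1 _ hF.2).symm.left_le_of_le_sup_left
    (h ▸ subset_union_right : F₂ ⊆ F₁' ∪ F₂')
  have h₂' : F₂' ⊆ F₂ := (hdisj _ hF.1 _ hF'.2).symm.left_le_of_le_sup_left
    (h ▸ subset_union_right : F₂' ⊆ F₁ ∪ F₂)
  rw [subset_antisymm h₁ h₁', subset_antisymm h₂ h₂']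

lemma hPoly_joinC {Δ₁ Δ₂ : Finset (Finset α)} {d₁ d₂ : ℕ}
    (hdisj : ∀ F₁ ∈ Δ₁, ∀ F₂ ∈ Δ₂, Disjoint F₁ F₂)
    (h₁ : ∀ F ∈ Δ₁, F.card ≤ d₁) (h₂ : ∀ F ∈ Δ₂, F.card ≤ d₂) :
    hPoly (d₁ + d₂) (joinC Δ₁ Δ₂) = hPoly d₁ Δ₁ * hPoly d₂ Δ₂ := by
  rw [hPoly, joinC, sum_image (union_injOn_of_disjoint hdisj), sum_product, hPoly, hPoly,
    sum_mul_sum]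
  refine sum_congr rfl fun F₁ hF₁ => sum_congr rfl fun F₂ hF₂ => ?_
  have hexp : d₁ + d₂ - (F₁.card + F₂.card) = (d₁ - F₁.card) + (d₂ - F₂.card) := by
    have := h₁ F₁ hF₁; have := h₂ F₂ hF₂; omega
  rw [card_union_of_disjoint (hdisj F₁ hF₁ F₂ hF₂), hexp, pow_add, pow_add]
  ring

lemma sup_card_joinC {Δ₁ Δ₂ : Finset (Finset α)} (hne₁ : Δ₁.Nonempty) (hne₂ : Δ₂.Nonempty)
    (hdisj : ∀ F₁ ∈ Δ₁, ∀ F₂ ∈ Δ₂, Disjoint F₁ F₂) :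
    (joinC Δ₁ Δ₂).sup card = Δ₁.sup card + Δ₂.sup card := by
  apply le_antisymm
  · refine Finset.sup_le fun F hF => ?_
    obtain ⟨⟨F₁, F₂⟩, hF₁₂, rfl⟩ := mem_image.mp hF
    obtain ⟨hF₁, hF₂⟩ := mem_product.mp hF₁₂
    exact (card_union_le _ _).trans (add_le_add (le_sup hF₁) (le_sup hF₂))
  · obtain ⟨F₁, hF₁, h₁⟩ := exists_mem_eq_sup Δ₁ hne₁ card
    obtain ⟨F₂, hF₂, h₂⟩ := exists_mem_eq_sup Δ₂ hne₂ card
    rw [h₁, h₂, ← card_union_of_disjoint (hdisj F₁ hF₁ F₂ hF₂)]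
    exact le_sup (mem_image.mpr ⟨(F₁, F₂), mem_product.mpr ⟨hF₁, hF₂⟩, rfl⟩)

def psSphere (P : Finset (Finset α)) : Finset (Finset α) :=
  (P.sup id).powerset.filter fun F => ∀ B ∈ P, ¬B ⊆ F

lemma mem_psSphere {P : Finset (Finset α)} {F : Finset α} :
    F ∈ psSphere P ↔ F ⊆ P.sup id ∧ ∀ B ∈ P, ¬B ⊆ F := by
  simp [psSphere]

lemma empty_mem_psSphere {P : Finset (Finset α)} (hP : ∀ B ∈ P, B.Nonempty) :
    ∅ ∈ psSphere P :=
  mem_psSphere.mpr ⟨empty_subset _, fun B hB hB0 => (hP B hB).ne_empty (subset_empty.mp hB0)⟩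

lemma psSphere_empty : psSphere (∅ : Finset (Finset α)) = {∅} := by
  ext F
  simp [mem_psSphere]

lemma psSphere_insert {B : Finset α} {P : Finset (Finset α)} (hB : ∀ B' ∈ P, Disjoint B B') :
    psSphere (insert B P) = joinC (B.powerset.erase B) (psSphere P) := by
  have hBV : Disjoint B (P.sup id) := Finset.disjoint_sup_right.mpr hB
  ext F
  simp only [joinC, mem_image, mem_product, mem_erase, mem_powerset, Prod.exists, mem_psSphere,
    sup_insert, id_eq, sup_eq_union, forall_mem_insert]
  constructor
  · rintro ⟨hF, hBF, hPF⟩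
    refine ⟨F ∩ B, F \ B, ⟨⟨fun h => hBF (h ▸ inter_subset_left), inter_subset_right⟩,
      fun x hx => ?_, fun B' hB' h => hPF B' hB' (h.trans sdiff_subset)⟩,
      by rw [union_comm, sdiff_union_inter]⟩
    obtain ⟨hxF, hxB⟩ := mem_sdiff.mp hx
    exact (mem_union.mp (hF hxF)).resolve_left hxB
  · rintro ⟨C, F, ⟨⟨hCB, hC⟩, hF, hPF⟩, rfl⟩
    refine ⟨union_subset_union hC hF, fun h => hCB (subset_antisymm hC ?_), fun B' hB' h => ?_⟩
    · exact (hBV.mono_right hF).left_le_of_le_sup_right h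
    · exact hPF B' hB' (((hB B' hB').symm.mono_right hC).left_le_of_le_sup_left h)

lemma isSphereHPoly_psSphere {P : Finset (Finset α)} (hne : ∀ B ∈ P, B.Nonempty)
    (hP : (P : Set (Finset α)).Pairwise Disjoint) :
    IsSphereHPoly ((psSphere P).sup card) (hPoly ((psSphere P).sup card) (psSphere P)) := by
  induction P using Finset.induction_on with
  | empty => simpa [psSphere_empty, hPoly] using IsSphereHPoly.one
  | insert B P hBP ih =>
    rw [forall_mem_insert] at hne
    rw [coe_insert, Set.pairwise_insert] at hP
    have hB : ∀ B' ∈ P, Disjoint B B' := fun B' hB' =>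
      (hP.2 B' hB' fun h => hBP (h ▸ hB')).1
    obtain ⟨a, ha⟩ := Nat.exists_eq_add_one_of_ne_zero (card_ne_zero.mpr hne.1)
    have hcross : ∀ C ∈ B.powerset.erase B, ∀ F ∈ psSphere P, Disjoint C F := fun C hC F hF =>
      ((Finset.disjoint_sup_right.mpr hB).mono_right (mem_psSphere.mp hF).1).mono_left
        (mem_powerset.mp (mem_of_mem_erase hC))
    have hempty : ∅ ∈ B.powerset.erase B :=
      mem_erase.mpr ⟨hne.1.ne_empty.symm, empty_mem_powerset B⟩
    rw [psSphere_insert hB, sup_card_joinC ⟨_, hempty⟩ ⟨_, empty_mem_psSphere hne.2⟩ hcross,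
      sup_card_powerset_erase ha, hPoly_joinC hcross (fun C => card_le_of_mem_powerset_erase ha)
      (fun F hF => le_sup hF), hPoly_boundary_simplex ha]
    exact (IsSphereHPoly.geom_sum a).mul (ih hne.2 hP.1)

lemma IsPSSphere.empty_mem {S : Finset (Finset α)} (hS : IsPSSphere S) : ∅ ∈ S := by
  obtain ⟨P, hP2, -, rfl⟩ := hS
  exact empty_mem_psSphere fun B hB => card_pos.mp (by linarith [hP2 B hB])

lemma IsPSSphere.isSphereHPoly {S : Finset (Finset α)} (hS : IsPSSphere S) :
    IsSphereHPoly (S.sup card) (hPoly (S.sup card) S) := by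
  obtain ⟨P, hP2, hP, rfl⟩ := hS
  exact isSphereHPoly_psSphere (fun B hB => card_pos.mp (by linarith [hP2 B hB])) hP

lemma EarAttach.hPoly_eq {Δ Δ' : Finset (Finset α)} (h : EarAttach Δ Δ') :
    Δ'.sup card = Δ.sup card ∧ ∃ (D g : ℕ) (p : ℤ[X]), 0 < g ∧ Δ.sup card = D + g ∧
      IsSphereHPoly D p ∧ hPoly (D + g) Δ' = hPoly (D + g) Δ + X ^ g * p := by
  obtain ⟨K, B, ⟨S, G, hS, hG, hSG, rfl, rfl⟩, hsup, hΔK, rfl⟩ := h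
  have hK : ∀ F ∈ S, ∀ H ∈ G.powerset, Disjoint F H := fun F hF H hH =>
    (hSG.mono_left (le_sup (f := id) hF)).mono_right (mem_powerset.mp hH)
  have hB : ∀ F ∈ S, ∀ H ∈ G.powerset.erase G, Disjoint F H := fun F hF H hH =>
    hK F hF H (mem_of_mem_erase hH)
  have hsupK := sup_card_joinC ⟨∅, IsPSSphere.empty_mem hS⟩ ⟨∅, empty_mem_powerset G⟩ hK
  rw [sup_card_powerset] at hsupK
  refine ⟨by rw [sup_union, hsup, sup_idem], S.sup card, G.card, hPoly (S.sup card) S,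
    card_pos.mpr hG, hsup.symm.trans hsupK, IsPSSphere.isSphereHPoly hS, ?_⟩
  have hunion : hPoly (S.sup card + G.card) (Δ ∪ joinC S G.powerset) +
      hPoly (S.sup card + G.card) (Δ ∩ joinC S G.powerset) =
      hPoly (S.sup card + G.card) Δ + hPoly (S.sup card + G.card) (joinC S G.powerset) :=
    sum_union_inter
  have hKpoly := hPoly_joinC hK (fun F hF => le_sup hF)
    fun H hH => card_le_card (mem_powerset.mp hH)
  have hBpoly := hPoly_joinC hB (fun F hF => le_sup hF)
    fun H hH => card_le_card (mem_powerset.mp (mem_of_mem_erase hH))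
  have hG1 := hPoly_powerset_eq_add G
  rw [hPoly_powerset] at hKpoly hG1
  rw [hΔK] at hunion
  linear_combination hunion + hKpoly - hBpoly + hPoly (S.sup card) S * hG1

lemma coeff_hPoly_of_earChain {c : ℕ → Finset (Finset α)} (h0 : IsPSSphere (c 0)) {n d : ℕ}
    (hstep : ∀ j < n, EarAttach (c j) (c (j + 1))) (hd : (c n).sup card = d) :
    (hPoly d (c n)).coeff d = n + 1 ∧
      ∀ i, (hPoly d (c n)).coeff i ≤ d.choose i + n * (d - 1).choose (i - 1) := by
  induction n generalizing d with
  | zero =>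
    subst hd
    have hS := h0.isSphereHPoly
    exact ⟨by simpa using hS.2, fun i => by simpa using (hS.1 i).2⟩
  | succ n ih =>
    obtain ⟨hsup, D, g, p, hg, hDg, hp, hpoly⟩ := (hstep n n.lt_succ_self).hPoly_eq
    obtain ⟨ihtop, ihle⟩ := ih (fun j hj => hstep j (by omega)) (hsup ▸ hd)
    obtain rfl : d = D + g := (hsup ▸ hd).symm.trans hDg
    rw [hpoly, coeff_add]
    refine ⟨by rw [ihtop, hp.coeff_X_pow_mul_add]; push_cast; ring, fun i => ?_⟩
    rw [coeff_add]
    push_cast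
    linarith [ihle i, hp.coeff_X_pow_mul_le hg i]

theorem PSEarDecomposable.coeff_hPoly_le {Δ : Finset (Finset α)} {d : ℕ}
    (hΔ : PSEarDecomposable Δ) (hd : Δ.sup card = d) (i : ℕ) :
    (hPoly d Δ).coeff i ≤ d.choose i + ((hPoly d Δ).coeff d - 1) * (d - 1).choose (i - 1) := by
  obtain ⟨n, c, h0, hstep, rfl⟩ := hΔ
  obtain ⟨htop, hle⟩ := coeff_hPoly_of_earChain h0 hstep hd
  rw [htop, add_sub_cancel_right]
  exact hle i

lemma sup_card_indepComplex [Fintype α] {M : Matroid α} {B : Finset α} (hB : M.IsBase ↑B) :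
    (indepComplex M).sup card = B.card := by
  refine le_antisymm (Finset.sup_le fun F hF => ?_) (le_sup (by simp [indepComplex, hB.indep]))
  obtain ⟨B', hB', hFB'⟩ := (by simpa [indepComplex] using hF : M.Indep ↑F).exists_isBase_superset
  have := Set.encard_le_encard hFB'
  rwa [hB'.encard_eq_encard_of_isBase hB, Set.encard_coe_eq_coe_finsetCard,
    Set.encard_coe_eq_coe_finsetCard, Nat.cast_le] at this

end

theorem h_indepComplex_le_general {α : Type*} [DecidableEq α] [Fintype α] (M : Matroid α)
    (d k : ℕ)
    (hrank : ∃ B : Finset α, M.IsBase ↑B ∧ B.card = d)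
    (hdec : PSEarDecomposable (indepComplex M))
    (hk : (hPoly d (indepComplex M)).coeff d = k) :
    ∀ i ≤ d, (hPoly d (indepComplex M)).coeff i ≤
      (d.choose i : ℤ) + ((k : ℤ) - 1) * ((d - 1).choose (i - 1) : ℤ) := by
  intro i _
  obtain ⟨B, hB, rfl⟩ := hrank
  simpa only [hk] using hdec.coeff_hPoly_le (sup_card_indepComplex hB) i

/-- For a loopless matroid of rank `d` whose (PS-ear decomposable) independence complex
has `h_d = k`, each `h_i` is at most `C(d,i) + (k-1)·C(d-1,i-1)`. -/
theorem h_indepComplex_le {α : Type*} [DecidableEq α] [Fintype α] (M : Matroid α)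
    (d k : ℕ) (hloopless : ∀ a ∈ M.E, M.Indep {a})
    (hrank : ∃ B : Finset α, M.IsBase ↑B ∧ B.card = d)
    (hdec : PSEarDecomposable (indepComplex M))
    (hk : (hPoly d (indepComplex M)).coeff d = k) :
    ∀ i ≤ d, (hPoly d (indepComplex M)).coeff i ≤
      (d.choose i : ℤ) + ((k : ℤ) - 1) * ((d - 1).choose (i - 1) : ℤ) :=
  h_indepComplex_le_general M d k hrank hdec hk
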